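/- arXiv:math/0502406 — 2 statements merged into one kernel-verified Lean document; each statement's English description precedes it below -/
import Mathlib

section
/- Let n ∈ ℕ and let m: [0,∞) → ℝ be n-times continuously differentiable with m = 0 on [2,∞) and ‖m‖_(n) := sup_{0≤r≤n, λ≥0} (1+λ)^n |m^{(r)}(λ)| < ∞. Then the function h: ℝ → ℝ defined by h(σ) = e^{σ²} m(σ²) is n-times continuously differentiable and there exists a constant C > 0, depending only on n, such that sup_{σ∈ℝ} |h^{(n)}(σ)| ≤ C ‖m‖_(n). -/
open MeasureTheory Real
open scoped ENNReal

open Set Finset Nat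


lemma myIterWithinEq {f : ℝ → ℝ} {s : Set ℝ} (i : ℕ) (hs : UniqueDiffOn ℝ s)
    (hf : ContDiff ℝ (i : ℕ∞) f) {x : ℝ} (hx : x ∈ s) :
    iteratedFDerivWithin ℝ i f s x = iteratedFDeriv ℝ i f x := by
  have h := contDiff_iff_ftaylorSeries.mp hf
  have h2 := (h.hasFTaylorSeriesUpToOn s).eq_iteratedFDerivWithin_of_uniqueDiffOn
    (m := i) le_rfl hs hx
  rw [← h2]; rfl

lemma myIterDerivZero (k : ℕ) : iteratedDeriv k (fun _ : ℝ => (0:ℝ)) = fun _ => 0 := by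
  funext x
  rw [iteratedDeriv_eq_iteratedFDeriv, iteratedFDeriv_zero_fun]
  simp

lemma myDerivLin : deriv (fun x : ℝ => 2 * x) = fun _ => (2:ℝ) := by
  funext x; simpa using ((hasDerivAt_id x).const_mul (2:ℝ)).deriv

lemma myIterDerivSq (i : ℕ) (hi : 1 ≤ i) (σ : ℝ) (hσ : |σ| < Real.sqrt 2) :
    |iteratedDeriv i (fun σ : ℝ => σ ^ 2) σ| ≤ 3 ^ i := by
  have hd : deriv (fun σ : ℝ => σ ^ 2) = fun x => 2 * x := by
    funext x; simp [deriv_pow]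
  match i, hi with
  | 1, _ =>
    rw [iteratedDeriv_one, hd]
    have h2 : Real.sqrt 2 ≤ 3/2 := by
      rw [show (3/2 : ℝ) = Real.sqrt ((3/2)^2) by rw [Real.sqrt_sq]; norm_num]
      apply Real.sqrt_le_sqrt; norm_num
    have := hσ.le.trans h2
    rw [abs_mul, abs_two]
    nlinarith [abs_nonneg σ]
  | 2, _ =>
    rw [iteratedDeriv_succ', hd, iteratedDeriv_one, myDerivLin]
    norm_num
  | (k+3), _ =>
    rw [iteratedDeriv_succ', hd, iteratedDeriv_succ', myDerivLin, iteratedDeriv_succ',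
      deriv_const', myIterDerivZero]
    simp

lemma myIterDerivExp (j : ℕ) : iteratedDeriv j Real.exp = Real.exp := by
  rw [iteratedDeriv_eq_iterate, Real.iter_deriv_exp]

lemma myGBound (n : ℕ) (m : ℝ → ℝ) (hm : ContDiffOn ℝ n m (Set.Ici 0)) (B : ℝ)
    (hB : ∀ r : ℕ, r ≤ n → ∀ l : ℝ, 0 ≤ l →
      (1 + l) ^ n * |iteratedDerivWithin r m (Set.Ici 0) l| ≤ B)
    (i : ℕ) (hi : i ≤ n) (y : ℝ) (hy : y ∈ Set.Ico (0:ℝ) 2) :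
    ‖iteratedFDerivWithin ℝ i (fun l => Real.exp l * m l) (Set.Ico 0 2) y‖ ≤
      2 ^ n * Real.exp 2 * B := by
  have hu : UniqueDiffOn ℝ (Set.Ico (0:ℝ) 2) := uniqueDiffOn_Ico 0 2
  have hin : (i : WithTop ℕ∞) ≤ (n : WithTop ℕ∞) := by exact_mod_cast hi
  refine le_trans (norm_iteratedFDerivWithin_mul_le (Real.contDiff_exp.contDiffOn)
    (hm.mono Set.Ico_subset_Ici_self) hu hy hin) ?_
  have hexp : ∀ j : ℕ, ‖iteratedFDerivWithin ℝ j Real.exp (Set.Ico 0 2) y‖ ≤ Real.exp 2 := by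
    intro j
    rw [myIterWithinEq j hu Real.contDiff_exp hy, norm_iteratedFDeriv_eq_norm_iteratedDeriv,
      myIterDerivExp]
    rw [Real.norm_eq_abs, abs_of_pos (Real.exp_pos _)]
    exact Real.exp_le_exp.mpr hy.2.le
  have hmB : ∀ r : ℕ, r ≤ n → ‖iteratedFDerivWithin ℝ r m (Set.Ico 0 2) y‖ ≤ B := by
    intro r hr
    rw [← Set.Ici_inter_Iio, iteratedFDerivWithin_inter (Iio_mem_nhds hy.2),
      norm_iteratedFDerivWithin_eq_norm_iteratedDerivWithin, Real.norm_eq_abs]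
    have h1 : (1:ℝ) ≤ (1 + y) ^ n := one_le_pow₀ (by linarith [hy.1])
    have habs := abs_nonneg (iteratedDerivWithin r m (Set.Ici 0) y)
    have h2 := hB r hr y hy.1
    nlinarith [mul_le_mul_of_nonneg_right h1 habs]
  have hB0 : 0 ≤ B := le_trans (by positivity) (hB 0 (Nat.zero_le n) 0 le_rfl)
  calc ∑ j ∈ Finset.range (i+1), (i.choose j : ℝ) *
        ‖iteratedFDerivWithin ℝ j Real.exp (Set.Ico 0 2) y‖ *
        ‖iteratedFDerivWithin ℝ (i - j) m (Set.Ico 0 2) y‖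
      ≤ ∑ j ∈ Finset.range (i+1), (i.choose j : ℝ) * Real.exp 2 * B := by
        refine Finset.sum_le_sum fun j _ => ?_
        have := hexp j
        have := hmB (i - j) (le_trans (Nat.sub_le i j) hi)
        gcongr <;> first | positivity | exact norm_nonneg _
    _ = 2 ^ i * Real.exp 2 * B := by
        rw [← Finset.sum_mul, ← Finset.sum_mul, ← Nat.cast_sum, Nat.sum_range_choose]
        push_cast; ring
    _ ≤ 2 ^ n * Real.exp 2 * B := by
        gcongr <;> norm_num

/-- If `m : [0,∞) → ℝ` is `C^n`, vanishes on `[2,∞)` and has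
`‖m‖_(n) = sup_{0≤r≤n, λ≥0} (1+λ)^n |m^{(r)}(λ)| ≤ B < ∞`, then `h(σ) = e^{σ²} m(σ²)` is
`C^n` on `ℝ` and `sup_σ |h^{(n)}(σ)| ≤ C B`, with `C` depending only on `n`. -/
theorem deriv_bound_exp_mul (n : ℕ) :
    ∃ C : ℝ, 0 < C ∧ ∀ m : ℝ → ℝ,
      ContDiffOn ℝ n m (Set.Ici 0) →
      (∀ l : ℝ, 2 ≤ l → m l = 0) →
      ∀ B : ℝ, 0 ≤ B →
      (∀ r : ℕ, r ≤ n → ∀ l : ℝ, 0 ≤ l →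
        (1 + l) ^ n * |iteratedDerivWithin r m (Set.Ici 0) l| ≤ B) →
      ContDiff ℝ n (fun σ : ℝ => Real.exp (σ ^ 2) * m (σ ^ 2)) ∧
      ∀ σ : ℝ, |iteratedDeriv n (fun σ : ℝ => Real.exp (σ ^ 2) * m (σ ^ 2)) σ| ≤ C * B := by
  refine ⟨n ! * (2 ^ n * Real.exp 2) * 3 ^ n, by positivity, ?_⟩
  intro m hm hm2 B hB0 hB
  set h : ℝ → ℝ := fun σ : ℝ => Real.exp (σ ^ 2) * m (σ ^ 2) with hh_def
  set g : ℝ → ℝ := fun l => Real.exp l * m l with hg_def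
  set q : ℝ → ℝ := fun σ : ℝ => σ ^ 2 with hq_def
  have hg : ContDiffOn ℝ n g (Set.Ici 0) := Real.contDiff_exp.contDiffOn.mul hm
  have hq : ContDiff ℝ n q := contDiff_id.pow 2
  have hmaps : ∀ σ : ℝ, q σ ∈ Set.Ici (0:ℝ) := fun σ => sq_nonneg σ
  have hcomp : h = g ∘ q := rfl
  have hh : ContDiff ℝ n h := by
    rw [← contDiffOn_univ, hcomp]
    exact hg.comp (hq.contDiffOn) (fun σ _ => hmaps σ)
  refine ⟨hh, ?_⟩
  -- bound on the open interval
  have hbound_in : ∀ σ : ℝ, |σ| < Real.sqrt 2 →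
      |iteratedDeriv n h σ| ≤ n ! * (2 ^ n * Real.exp 2) * 3 ^ n * B := by
    intro σ hσ
    have hσmem : σ ∈ Set.Ioo (-Real.sqrt 2) (Real.sqrt 2) := abs_lt.mp hσ
    have hqt : Set.MapsTo q (Set.Ioo (-Real.sqrt 2) (Real.sqrt 2)) (Set.Ico (0:ℝ) 2) := by
      intro x hx
      refine ⟨sq_nonneg x, ?_⟩
      have : x ^ 2 < (Real.sqrt 2) ^ 2 := sq_lt_sq' hx.1 hx.2
      rwa [Real.sq_sqrt (by norm_num : (0:ℝ) ≤ 2)] at this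
    have hcompb := norm_iteratedFDerivWithin_comp_le (n := n) (N := (n : WithTop ℕ∞))
      (hg.mono Set.Ico_subset_Ici_self) (hq.contDiffOn) le_rfl
      (uniqueDiffOn_Ico 0 2) (uniqueDiffOn_Ioo _ _) hqt hσmem
      (C := 2 ^ n * Real.exp 2 * B) (D := 3)
      (fun i hi => myGBound n m hm B hB i hi (q σ) (hqt hσmem))
      (fun i hi1 hin => by
        rw [iteratedFDerivWithin_of_isOpen i isOpen_Ioo hσmem,
          norm_iteratedFDeriv_eq_norm_iteratedDeriv, Real.norm_eq_abs]
        exact myIterDerivSq i hi1 σ hσ)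
    rw [← hcomp, iteratedFDerivWithin_of_isOpen n isOpen_Ioo hσmem,
      norm_iteratedFDeriv_eq_norm_iteratedDeriv, Real.norm_eq_abs] at hcompb
    calc |iteratedDeriv n h σ| ≤ n ! * (2 ^ n * Real.exp 2 * B) * 3 ^ n := hcompb
      _ = n ! * (2 ^ n * Real.exp 2) * 3 ^ n * B := by ring
  -- bound outside
  have hbound_out : ∀ σ : ℝ, Real.sqrt 2 < |σ| → iteratedDeriv n h σ = 0 := by
    intro σ hσ
    have hopen : IsOpen {x : ℝ | Real.sqrt 2 < |x|} :=
      isOpen_lt continuous_const continuous_abs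
    have hzero : ∀ x ∈ {x : ℝ | Real.sqrt 2 < |x|}, h x = 0 := by
      intro x hx
      have h2 : (2:ℝ) ≤ x ^ 2 := by
        have : (Real.sqrt 2) ^ 2 < |x| ^ 2 := by
          have h0 : (0:ℝ) ≤ Real.sqrt 2 := Real.sqrt_nonneg 2
          nlinarith [Set.mem_setOf_eq ▸ hx]
        rw [Real.sq_sqrt (by norm_num : (0:ℝ) ≤ 2), sq_abs] at this
        exact this.le
      simp [hh_def, hm2 _ h2]
    have heq : h =ᶠ[nhds σ] (fun _ => (0:ℝ)) :=
      Filter.eventually_of_mem (hopen.mem_nhds hσ) hzero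
    calc iteratedDeriv n h σ = iteratedDeriv n (fun _ => (0:ℝ)) σ := by
          rw [iteratedDeriv_eq_iteratedFDeriv, iteratedDeriv_eq_iteratedFDeriv]
          congr 1
          rw [← iteratedFDerivWithin_univ, ← iteratedFDerivWithin_univ]
          exact Filter.EventuallyEq.iteratedFDerivWithin_eq
            (by rwa [nhdsWithin_univ]) (heq.eq_of_nhds) n
      _ = 0 := by rw [myIterDerivZero]
  -- closure argument
  intro σ
  have hcont : Continuous (fun x => |iteratedDeriv n h x|) :=
    (hh.continuous_iteratedDeriv n le_rfl).abs
  have hclosed : IsClosed {x : ℝ | |iteratedDeriv n h x| ≤ n ! * (2 ^ n * Real.exp 2) * 3 ^ n * B} :=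
    isClosed_le hcont continuous_const
  have hdense : Dense ({Real.sqrt 2, -Real.sqrt 2} : Set ℝ)ᶜ :=
    (Set.toFinite _).countable.dense_compl ℝ
  have hsub : ({Real.sqrt 2, -Real.sqrt 2} : Set ℝ)ᶜ ⊆
      {x : ℝ | |iteratedDeriv n h x| ≤ n ! * (2 ^ n * Real.exp 2) * 3 ^ n * B} := by
    intro x hx
    rcases lt_trichotomy (|x|) (Real.sqrt 2) with hlt | heq | hgt
    · exact hbound_in x hlt
    · exfalso
      rcases abs_eq (Real.sqrt_nonneg 2) |>.mp heq with h1 | h1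
      · exact hx (Or.inl h1)
      · exact hx (Or.inr h1)
    · simp only [Set.mem_setOf_eq, hbound_out x hgt, abs_zero]
      positivity
  have : σ ∈ {x : ℝ | |iteratedDeriv n h x| ≤ n ! * (2 ^ n * Real.exp 2) * 3 ^ n * B} := by
    have := hclosed.closure_subset ((closure_mono hsub) (hdense.closure_eq ▸ Set.mem_univ σ))
    simpa using this
  simpa using this
end

section
/- Let ψ: (0,∞) → ℝ be a smooth function supported in [1/2, 2], and let n ≤ n' be nonnegative integers. There exists a constant C > 0, depending only on n, n' and ψ, such that for every n'-times continuously differentiable function m: (0,∞) → ℝ with ‖m‖_(n') < ∞ and every j ∈ ℕ, the function h_j(σ) = m(2^j σ) ψ(σ) satisfies ‖h_j‖_(n) ≤ C 2^{j(n−n')} ‖m‖_(n'). -/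
open MeasureTheory Real
open scoped ENNReal

private lemma iteratedDerivWithin_of_isOpen' {f : ℝ → ℝ} {s : Set ℝ} {k : ℕ} {x : ℝ}
    (hs : IsOpen s) (hx : x ∈ s) :
    iteratedDerivWithin k f s x = iteratedDeriv k f x := by
  rw [iteratedDerivWithin_eq_iteratedFDerivWithin, iteratedDeriv_eq_iteratedFDeriv,
    iteratedFDerivWithin_of_isOpen k hs hx]

private lemma scaled_iteratedDeriv {m : ℝ → ℝ} {n' : ℕ}
    (hm : ContDiffOn ℝ n' m (Set.Ioi 0)) {c : ℝ} (hc : 0 < c) :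
    ∀ k : ℕ, k ≤ n' → ∀ x : ℝ, 0 < x →
      iteratedDeriv k (fun σ : ℝ => m (c * σ)) x = c ^ k * iteratedDeriv k m (c * x) := by
  intro k
  induction k with
  | zero => intro _ x _; simp
  | succ k ih =>
    intro hk x hx
    have hk' : k ≤ n' := le_of_lt (Nat.lt_of_succ_le hk)
    have hcx : 0 < c * x := mul_pos hc hx
    have hdm : DifferentiableOn ℝ (iteratedDerivWithin k m (Set.Ioi 0)) (Set.Ioi 0) :=
      hm.differentiableOn_iteratedDerivWithin (by exact_mod_cast Nat.lt_of_succ_le hk)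
        isOpen_Ioi.uniqueDiffOn
    have hdm' : DifferentiableOn ℝ (iteratedDeriv k m) (Set.Ioi 0) :=
      hdm.congr fun y hy => (iteratedDerivWithin_of_isOpen' isOpen_Ioi hy).symm
    have hFd : DifferentiableAt ℝ (iteratedDeriv k m) (c * x) :=
      hdm'.differentiableAt (isOpen_Ioi.mem_nhds hcx)
    have hF : HasDerivAt (iteratedDeriv k m) (iteratedDeriv (k + 1) m (c * x)) (c * x) := by
      rw [iteratedDeriv_succ]; exact hFd.hasDerivAt
    have hinner : HasDerivAt (fun y : ℝ => c * y) c x := by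
      simpa using (hasDerivAt_id x).const_mul c
    have hcomp : HasDerivAt (fun y : ℝ => iteratedDeriv k m (c * y))
        (iteratedDeriv (k + 1) m (c * x) * c) x := hF.comp x hinner
    have hmain : HasDerivAt (fun y : ℝ => c ^ k * iteratedDeriv k m (c * y))
        (c ^ k * (iteratedDeriv (k + 1) m (c * x) * c)) x := hcomp.const_mul _
    have hev : iteratedDeriv k (fun σ : ℝ => m (c * σ)) =ᶠ[nhds x]
        fun y => c ^ k * iteratedDeriv k m (c * y) := by
      filter_upwards [isOpen_Ioi.mem_nhds hx] with y hy
      exact ih hk' y hy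
    rw [iteratedDeriv_succ, hev.deriv_eq, hmain.deriv]
    ring

/-- Dyadic localization estimate: if `ψ` is smooth and supported in `[1/2, 2]` and
`n ≤ n'`, then there is `C > 0` (depending only on `n`, `n'`, `ψ`) such that for every
`C^{n'}` function `m : (0,∞) → ℝ` with `‖m‖_(n') ≤ B < ∞` and every `j ∈ ℕ`, the function
`h_j(σ) = m(2^j σ) ψ(σ)` satisfies `‖h_j‖_(n) ≤ C 2^{j(n-n')} B`. -/
theorem dyadic_piece_norm_bound (ψ : ℝ → ℝ)
    (hψsmooth : ContDiff ℝ (⊤ : ℕ∞) ψ)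
    (hψsupp : Function.support ψ ⊆ Set.Icc (1 / 2 : ℝ) 2)
    (n n' : ℕ) (hnn' : n ≤ n') :
    ∃ C : ℝ, 0 < C ∧ ∀ m : ℝ → ℝ,
      ContDiffOn ℝ n' m (Set.Ioi 0) →
      ∀ B : ℝ, 0 ≤ B →
      (∀ r : ℕ, r ≤ n' → ∀ l : ℝ, 0 < l →
        (1 + l) ^ n' * |iteratedDerivWithin r m (Set.Ioi 0) l| ≤ B) →
      ∀ j : ℕ, ∀ r : ℕ, r ≤ n → ∀ l : ℝ, 0 < l →
        (1 + l) ^ n *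
            |iteratedDerivWithin r (fun σ : ℝ => m (2 ^ j * σ) * ψ σ) (Set.Ioi 0) l| ≤
          C * (2 : ℝ) ^ ((j : ℤ) * ((n : ℤ) - (n' : ℤ))) * B := by
  have hsu : UniqueDiffOn ℝ (Set.Ioi (0 : ℝ)) := isOpen_Ioi.uniqueDiffOn
  have hψc : HasCompactSupport ψ :=
    HasCompactSupport.intro isCompact_Icc fun x hx => by
      by_contra h0
      exact hx (hψsupp (Function.mem_support.mpr h0))
  obtain ⟨K, hK0, hK⟩ : ∃ K : ℝ, 0 ≤ K ∧ ∀ k, k ≤ n → ∀ x : ℝ, |iteratedDeriv k ψ x| ≤ K := by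
    have H : ∀ k : ℕ, ∃ Ck : ℝ, ∀ x, |iteratedDeriv k ψ x| ≤ Ck := by
      intro k
      have hcont : Continuous (iteratedDeriv k ψ) :=
        hψsmooth.continuous_iteratedDeriv k (by exact_mod_cast le_top)
      have hcs : HasCompactSupport (iteratedDeriv k ψ) := by
        refine (hψc.iteratedFDeriv (𝕜 := ℝ) k).mono' ?_
        refine (Function.support_subset_iff.mpr ?_).trans (subset_tsupport _)
        intro x hx
        rw [Function.mem_support]
        intro h0
        apply hx
        rw [iteratedDeriv_eq_iteratedFDeriv, h0]
        simp
      obtain ⟨Ck, hCk⟩ := hcont.bounded_above_of_compact_support hcs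
      exact ⟨Ck, fun x => by simpa using hCk x⟩
    choose Cf hCf using H
    refine ⟨max 0 ((Finset.range (n + 1)).sup' (by simp) Cf), le_max_left _ _, ?_⟩
    intro k hk x
    exact (hCf k x).trans ((Finset.le_sup' Cf
      (Finset.mem_range.mpr (Nat.lt_succ_of_le hk))).trans (le_max_right _ _))
  refine ⟨3 ^ n * 2 ^ n * 2 ^ n' * (K + 1), by positivity, ?_⟩
  intro m hm B hB hmB j r hr l hl
  have hc0 : (0 : ℝ) < 2 ^ j := by positivity
  have hc1 : (1 : ℝ) ≤ 2 ^ j := one_le_pow₀ (by norm_num)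
  set P : ℝ := (2 : ℝ) ^ ((j : ℤ) * ((n : ℤ) - (n' : ℤ))) with hPdef
  have hP0 : 0 < P := by positivity
  by_cases hmem : l ∈ Set.Icc (1 / 2 : ℝ) 2
  · -- main case
    obtain ⟨hl2, hl3⟩ := hmem
    have hf : ContDiffOn ℝ n' (fun σ : ℝ => m (2 ^ j * σ)) (Set.Ioi 0) := by
      have := hm.comp ((contDiff_const.mul contDiff_id).contDiffOn
        (s := Set.Ioi (0 : ℝ)) (n := (n' : WithTop ℕ∞)))
        (fun x hx => mul_pos hc0 hx)
      simpa [Function.comp_def] using this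
    have hgψ : ContDiffOn ℝ n' ψ (Set.Ioi 0) := (hψsmooth.of_le (by exact_mod_cast le_top)).contDiffOn
    have hLeib := norm_iteratedFDerivWithin_mul_le (𝕜 := ℝ) hf hgψ hsu hl
      (n := r) (by exact_mod_cast hr.trans hnn')
    -- bound each factor
    have hab : ∀ i ∈ Finset.range (r + 1),
        (r.choose i : ℝ) * ‖iteratedFDerivWithin ℝ i (fun σ : ℝ => m (2 ^ j * σ))
            (Set.Ioi 0) l‖ * ‖iteratedFDerivWithin ℝ (r - i) ψ (Set.Ioi 0) l‖ ≤
          (r.choose i : ℝ) * (2 ^ n' * P * B) * (K + 1) := by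
      intro i hi
      rw [Finset.mem_range, Nat.lt_succ_iff] at hi
      have hin : i ≤ n' := (hi.trans hr).trans hnn'
      have hy : (0 : ℝ) < 2 ^ j * l := mul_pos hc0 hl
      -- a_i bound
      have ha : ‖iteratedFDerivWithin ℝ i (fun σ : ℝ => m (2 ^ j * σ)) (Set.Ioi 0) l‖ ≤
          2 ^ n' * P * B := by
        rw [norm_iteratedFDerivWithin_eq_norm_iteratedDerivWithin, Real.norm_eq_abs,
          iteratedDerivWithin_of_isOpen' isOpen_Ioi hl,
          scaled_iteratedDeriv hm hc0 i hin l hl, abs_mul, abs_pow, abs_of_pos hc0,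
          ← iteratedDerivWithin_of_isOpen' isOpen_Ioi (Set.mem_Ioi.mpr hy)]
        have hmb := hmB i hin (2 ^ j * l) hy
        have hlow : ((2 : ℝ) ^ j / 2) ^ n' ≤ (1 + 2 ^ j * l) ^ n' := by
          apply pow_le_pow_left₀ (by positivity)
          have : (2 : ℝ) ^ j * (1 / 2) ≤ 2 ^ j * l :=
            mul_le_mul_of_nonneg_left hl2 hc0.le
          nlinarith
        have h1 : ((2 : ℝ) ^ j / 2) ^ n' *
            |iteratedDerivWithin i m (Set.Ioi 0) (2 ^ j * l)| ≤ B :=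
          le_trans (mul_le_mul_of_nonneg_right hlow (abs_nonneg _)) hmb
        have habs : |iteratedDerivWithin i m (Set.Ioi 0) (2 ^ j * l)| ≤
            B / ((2 : ℝ) ^ j / 2) ^ n' := by
          rw [le_div_iff₀ (by positivity)]
          linarith [h1]
        calc ((2 : ℝ) ^ j) ^ i * |iteratedDerivWithin i m (Set.Ioi 0) (2 ^ j * l)| ≤
              ((2 : ℝ) ^ j) ^ i * (B / ((2 : ℝ) ^ j / 2) ^ n') :=
              mul_le_mul_of_nonneg_left habs (by positivity)
          _ = (((2 : ℝ) ^ j) ^ i / ((2 : ℝ) ^ j / 2) ^ n') * B := by ring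
          _ ≤ (2 ^ n' * P) * B := by
              apply mul_le_mul_of_nonneg_right _ hB
              have he : ((2 : ℝ) ^ j) ^ i / ((2 : ℝ) ^ j / 2) ^ n' =
                  2 ^ n' * ((2 : ℝ) ^ j) ^ ((i : ℤ) - (n' : ℤ)) := by
                rw [zpow_sub₀ hc0.ne', zpow_natCast, zpow_natCast, div_pow]
                field_simp
              rw [he]
              apply mul_le_mul_of_nonneg_left _ (by positivity)
              have hle : ((2 : ℝ) ^ j) ^ ((i : ℤ) - (n' : ℤ)) ≤
                  ((2 : ℝ) ^ j) ^ ((n : ℤ) - (n' : ℤ)) :=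
                zpow_le_zpow_right₀ hc1
                  (sub_le_sub_right (by exact_mod_cast hi.trans hr) _)
              refine hle.trans (le_of_eq ?_)
              rw [hPdef, ← zpow_natCast (2 : ℝ) j, ← zpow_mul]
          _ = 2 ^ n' * P * B := by ring
      have hb : ‖iteratedFDerivWithin ℝ (r - i) ψ (Set.Ioi 0) l‖ ≤ K + 1 := by
        rw [norm_iteratedFDerivWithin_eq_norm_iteratedDerivWithin, Real.norm_eq_abs,
          iteratedDerivWithin_of_isOpen' isOpen_Ioi hl]
        have := hK (r - i) ((Nat.sub_le r i).trans hr) l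
        linarith
      have hc : (0 : ℝ) ≤ (r.choose i : ℝ) := by positivity
      calc (r.choose i : ℝ) * ‖iteratedFDerivWithin ℝ i (fun σ : ℝ => m (2 ^ j * σ))
              (Set.Ioi 0) l‖ * ‖iteratedFDerivWithin ℝ (r - i) ψ (Set.Ioi 0) l‖ ≤
            (r.choose i : ℝ) * (2 ^ n' * P * B) * (K + 1) := by
            apply mul_le_mul _ hb (norm_nonneg _) (by positivity)
            exact mul_le_mul_of_nonneg_left ha hc
        _ = _ := rfl
    have hsum : ‖iteratedFDerivWithin ℝ r (fun σ : ℝ => m (2 ^ j * σ) * ψ σ)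
        (Set.Ioi 0) l‖ ≤ 2 ^ r * ((2 ^ n' * P * B) * (K + 1)) := by
      refine hLeib.trans ((Finset.sum_le_sum hab).trans (le_of_eq ?_))
      rw [← Finset.sum_mul, ← Finset.sum_mul, ← Nat.cast_sum, Nat.sum_range_choose]
      push_cast
      ring
    have habs : |iteratedDerivWithin r (fun σ : ℝ => m (2 ^ j * σ) * ψ σ)
        (Set.Ioi 0) l| ≤ 2 ^ r * ((2 ^ n' * P * B) * (K + 1)) := by
      rw [← Real.norm_eq_abs, ← norm_iteratedFDerivWithin_eq_norm_iteratedDerivWithin]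
      exact hsum
    have h1l : (1 + l) ^ n ≤ 3 ^ n := pow_le_pow_left₀ (by linarith) (by linarith) n
    calc (1 + l) ^ n * |iteratedDerivWithin r (fun σ : ℝ => m (2 ^ j * σ) * ψ σ)
            (Set.Ioi 0) l| ≤
          3 ^ n * (2 ^ r * ((2 ^ n' * P * B) * (K + 1))) := by
          apply mul_le_mul h1l habs (abs_nonneg _) (by positivity)
      _ ≤ 3 ^ n * (2 ^ n * ((2 ^ n' * P * B) * (K + 1))) := by
          have h2 : (2 : ℝ) ^ r ≤ 2 ^ n := pow_le_pow_right₀ (by norm_num) hr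
          have hX : (0 : ℝ) ≤ 2 ^ n' * P * B * (K + 1) := by positivity
          exact mul_le_mul_of_nonneg_left (mul_le_mul_of_nonneg_right h2 hX) (by positivity)
      _ = 3 ^ n * 2 ^ n * 2 ^ n' * (K + 1) * P * B := by ring
  · -- l outside the support of ψ : everything vanishes
    have hU : IsOpen (Set.Ioi (0 : ℝ) ∩ (Set.Icc (1 / 2 : ℝ) 2)ᶜ) :=
      isOpen_Ioi.inter isClosed_Icc.isOpen_compl
    have hlU : l ∈ Set.Ioi (0 : ℝ) ∩ (Set.Icc (1 / 2 : ℝ) 2)ᶜ := ⟨hl, hmem⟩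
    have heq : Set.EqOn (fun σ : ℝ => m (2 ^ j * σ) * ψ σ) (fun _ => (0 : ℝ))
        (Set.Ioi (0 : ℝ) ∩ (Set.Icc (1 / 2 : ℝ) 2)ᶜ) := by
      intro x hx
      have hx0 : ψ x = 0 := by
        by_contra h0
        exact hx.2 (hψsupp (Function.mem_support.mpr h0))
      simp [hx0]
    have hzero : iteratedDerivWithin r (fun σ : ℝ => m (2 ^ j * σ) * ψ σ)
        (Set.Ioi 0) l = 0 := by
      rw [iteratedDerivWithin_of_isOpen' isOpen_Ioi hl,
        heq.iteratedDeriv_of_isOpen hU r hlU,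
        iteratedDeriv_eq_iteratedFDeriv, iteratedFDeriv_zero_fun]
      simp
    rw [hzero]
    simp only [abs_zero, mul_zero]
    positivity
end
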